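/- Let S be a discrete semigroup, E a complex Banach space, π a JdLG-admissible representation of S on E, and E = E_r ⊕ E_aws the JdLG-decomposition. If p ∈ βS is an idempotent ultrafilter (p·p = p), then p-lim_s π_s ξ_r = ξ_r in the weak topology of E for every ξ_r ∈ E_r. -/

import Mathlib

open Filter Topology Set MeasureTheory BoundedContinuousFunction

noncomputable section

namespace JdLG

section Operators

variable (E : Type*) [NormedAddCommGroup E] [NormedSpace ℂ E]

/-- The closure of a set of bounded operators in the weak operator topology. -/
def wotClosure (T : Set (E →L[ℂ] E)) : Set (E →L[ℂ] E) :=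
  (ContinuousLinearMapWOT.ofCLM : (E →L[ℂ] E) → _) ⁻¹' closure ((ContinuousLinearMapWOT.ofCLM : (E →L[ℂ] E) → _) '' T)

/-- A set of bounded operators is relatively weakly compact if it is relatively compact in
the weak operator topology. -/
def RelWeaklyCompact (T : Set (E →L[ℂ] E)) : Prop :=
  IsCompact (closure ((ContinuousLinearMapWOT.ofCLM : (E →L[ℂ] E) → _) '' T))

/-- The reversible part `E_r` of `E` for a set of operators `T`, defined through the weak
operator closure `𝒮` of `T`. -/
def rev (T : Set (E →L[ℂ] E)) : Set E :=
  {ξ | ∀ u ∈ wotClosure E T, ∃ v ∈ wotClosure E T, v (u ξ) = ξ}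

/-- The almost weakly stable part `E_aws` of `E` for a set of operators `T`. -/
def aws (T : Set (E →L[ℂ] E)) : Set E :=
  {ξ | ∃ u ∈ wotClosure E T, u ξ = 0}

/-- A semigroup of operators is JdLG-admissible if it is relatively weakly compact and
`E` decomposes as the direct sum `E = E_r ⊕ E_aws`: every vector is uniquely the sum of a
reversible vector and an almost weakly stable vector. -/
def Admissible (T : Set (E →L[ℂ] E)) : Prop :=
  RelWeaklyCompact E T ∧
    ∀ ξ : E, ∃! q : E × E, q.1 ∈ rev E T ∧ q.2 ∈ aws E T ∧ q.1 + q.2 = ξ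

variable {S : Type*}

/-- A representation of a (semitopological) semigroup `S` on `E`: a homomorphism into the
bounded operators on `E` which is continuous into the weak operator topology. -/
def IsRepresentation [Mul S] [TopologicalSpace S] (π : S → E →L[ℂ] E) : Prop :=
  (∀ s t : S, π (s * t) = (π s).comp (π t)) ∧
    Continuous fun s => (ContinuousLinearMapWOT.ofCLM : (E →L[ℂ] E) → _) (π s)

end Operators

section Means

variable (S : Type*)

/-- A function is bounded in the sup norm. -/
def IsBddFun (f : S → ℂ) : Prop := ∃ C : ℝ, ∀ t, ‖f t‖ ≤ C

/-- A bounded continuous function is weakly almost periodic if its set of right translates is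
relatively compact in the weak topology of `C_b(S)`. Here we state this for a plain function
which coincides with some bounded continuous function. -/
def IsWAP [Mul S] [TopologicalSpace S] (f : S → ℂ) : Prop :=
  (∃ F : BoundedContinuousFunction S ℂ, ∀ t, F t = f t) ∧
    IsCompact (closure ((toWeakSpace ℂ (BoundedContinuousFunction S ℂ)) ''
      {G : BoundedContinuousFunction S ℂ | ∃ s : S, ∀ t, G t = f (t * s)}))

/-- A mean on the class `P` of (bounded) functions on `S`: a positive linear functional of
norm one. (The value of `toFun` outside `P` is irrelevant.) -/
structure MeanOn (P : (S → ℂ) → Prop) where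
  toFun : (S → ℂ) → ℂ
  map_add : ∀ f g, P f → P g → toFun (f + g) = toFun f + toFun g
  map_smul : ∀ (c : ℂ) (f), P f → toFun (c • f) = c * toFun f
  positive : ∀ f, P f → (∀ t, 0 ≤ (f t).re ∧ (f t).im = 0) →
    0 ≤ (toFun f).re ∧ (toFun f).im = 0
  map_one : toFun (fun _ => 1) = 1
  norm_le : ∀ (f) (C : ℝ), P f → (∀ t, ‖f t‖ ≤ C) → ‖toFun f‖ ≤ C

variable {S}
variable {P : (S → ℂ) → Prop}

/-- A mean is left-invariant if it is invariant under all left translations of the argument. -/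
def MeanOn.LeftInvariant [Mul S] (m : MeanOn S P) : Prop :=
  ∀ (s : S) (f), P f → m.toFun (fun t => f (s * t)) = m.toFun f

/-- A mean is right-invariant if it is invariant under all right translations of the
argument. -/
def MeanOn.RightInvariant [Mul S] (m : MeanOn S P) : Prop :=
  ∀ (s : S) (f), P f → m.toFun (fun t => f (t * s)) = m.toFun f

/-- A bi-invariant mean is both left- and right-invariant. -/
def MeanOn.BiInvariant [Mul S] (m : MeanOn S P) : Prop :=
  m.LeftInvariant ∧ m.RightInvariant

end Means

attribute [local instance] Ultrafilter.mul Ultrafilter.semigroup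

section Ultra

variable {S : Type*}

/-- The upper Banach density of a subset of a discrete semigroup, computed through the
left-invariant means on `ℓ^∞(S)`. -/
def dStarDiscrete [Mul S] (A : Set S) : ℝ :=
  sSup {x : ℝ | ∃ m : MeanOn S (IsBddFun S), m.LeftInvariant ∧
    (m.toFun (A.indicator fun _ => 1)).re = x}

/-- `Δ*(S)` is the set of ultrafilters all of whose members have positive upper Banach
density. -/
def DeltaStar (S : Type*) [Mul S] : Set (Ultrafilter S) :=
  {p | ∀ A ∈ p, 0 < dStarDiscrete A}

/-- A nonempty subset of `βS` which is a two-sided ideal for the extended multiplication. -/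
def IsTwoSidedIdeal [Semigroup S] (K : Set (Ultrafilter S)) : Prop :=
  K.Nonempty ∧ ∀ p ∈ K, ∀ q : Ultrafilter S, p * q ∈ K ∧ q * p ∈ K

end Ultra

end JdLG

attribute [local instance] Ultrafilter.mul Ultrafilter.semigroup

section AuxJdLG

variable {E : Type*} [NormedAddCommGroup E] [NormedSpace ℂ E]

/-- The linear equivalence from bounded operators to the weak operator topology copy. -/
def JdLGtoWOT : (E →L[ℂ] E) ≃ₗ[ℂ] (E →WOT[ℂ] E) :=
  (ContinuousLinearMapWOT.linearEquiv ℂ).symm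

lemma JdLGtoWOT_apply (A : E →L[ℂ] E) (x : E) : JdLGtoWOT A x = A x := rfl

private lemma wot_symm_apply (x : (E →WOT[ℂ] E)) (ξ : E) :
    ((JdLGtoWOT (E := E))).symm x ξ = x ξ := rfl

private lemma wot_cont_mul_left (a : E →L[ℂ] E) :
    Continuous fun x : (E →WOT[ℂ] E) =>
      (JdLGtoWOT (E := E)) (a ∘L ((JdLGtoWOT (E := E))).symm x) := by
  refine ContinuousLinearMapWOT.continuous_of_dual_apply_continuous fun ξ y => ?_
  have h : ∀ x : (E →WOT[ℂ] E),
      y (((JdLGtoWOT (E := E)) (a ∘L ((JdLGtoWOT (E := E))).symm x)) ξ)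
        = (y.comp a) (x ξ) := fun x => by
    rw [JdLGtoWOT_apply]; simp [wot_symm_apply]
  simpa only [h] using ContinuousLinearMapWOT.continuous_dual_apply ξ (y.comp a)

private lemma wot_cont_mul_right (a : E →L[ℂ] E) :
    Continuous fun x : (E →WOT[ℂ] E) =>
      (JdLGtoWOT (E := E)) (((JdLGtoWOT (E := E))).symm x ∘L a) := by
  refine ContinuousLinearMapWOT.continuous_of_dual_apply_continuous fun ξ y => ?_
  have h : ∀ x : (E →WOT[ℂ] E),
      y (((JdLGtoWOT (E := E)) (((JdLGtoWOT (E := E))).symm x ∘L a)) ξ)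
        = y (x (a ξ)) := fun x => by
    rw [JdLGtoWOT_apply]; simp [wot_symm_apply]
  simpa only [h] using ContinuousLinearMapWOT.continuous_dual_apply (a ξ) y

/-- The WOT closure of a set of operators closed under composition is closed under
composition. -/
private lemma wotClosure_comp_mem {T : Set (E →L[ℂ] E)}
    (hT : ∀ a ∈ T, ∀ b ∈ T, a ∘L b ∈ T) {a b : E →L[ℂ] E}
    (ha : a ∈ JdLG.wotClosure E T) (hb : b ∈ JdLG.wotClosure E T) :
    a ∘L b ∈ JdLG.wotClosure E T := by
  set τ := (JdLGtoWOT (E := E)) with hτ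
  set K := closure (τ '' T) with hK
  -- step 1 : for t ∈ T and b in the closure, t ∘L b is in the closure
  have step1 : ∀ t ∈ T, ∀ c : E →L[ℂ] E, τ c ∈ K → τ (t ∘L c) ∈ K := by
    intro t ht c hc
    have hmaps : Set.MapsTo (fun x : (E →WOT[ℂ] E) => τ (t ∘L τ.symm x))
        (τ '' T) (τ '' T) := by
      rintro - ⟨s, hs, rfl⟩
      exact ⟨t ∘L s, hT t ht s hs, by simp only [LinearEquiv.symm_apply_apply]⟩
    have := (hmaps.closure (wot_cont_mul_left t)) hc
    simpa only [LinearEquiv.symm_apply_apply] using this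
  -- step 2 : compose on the right with a fixed element of the closure
  have hmaps2 : Set.MapsTo (fun x : (E →WOT[ℂ] E) => τ (τ.symm x ∘L b))
      (τ '' T) K := by
    rintro - ⟨s, hs, rfl⟩
    simp only [LinearEquiv.symm_apply_apply]
    exact step1 s hs b hb
  have h2 : Set.MapsTo (fun x : (E →WOT[ℂ] E) => τ (τ.symm x ∘L b)) K
      (closure K) := hmaps2.closure (wot_cont_mul_right b)
  have := h2 (show τ a ∈ K from ha)
  rw [isClosed_closure.closure_eq] at this
  show τ (a ∘L b) ∈ K
  simpa only [LinearEquiv.symm_apply_apply] using this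

attribute [local instance] Ultrafilter.mul Ultrafilter.semigroup

/-- The ultrafilter limit of a representation is multiplicative. -/
private lemma tendsto_wot_ultra_mul {S : Type*} [Semigroup S]
    (π : S → E →L[ℂ] E) (hmul : ∀ s t : S, π (s * t) = (π s).comp (π t))
    (p q : Ultrafilter S) {A B : (E →WOT[ℂ] E)}
    (hA : Filter.Tendsto (fun s => (JdLGtoWOT (E := E)) (π s)) ↑q (nhds A))
    (hB : Filter.Tendsto (fun s => (JdLGtoWOT (E := E)) (π s)) ↑p (nhds B)) :
    Filter.Tendsto (fun s => (JdLGtoWOT (E := E)) (π s)) ↑(p * q)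
      (nhds ((JdLGtoWOT (E := E))
        (((JdLGtoWOT (E := E))).symm B ∘L ((JdLGtoWOT (E := E))).symm A))) := by
  set τ := (JdLGtoWOT (E := E)) with hτ
  set A' := τ.symm A with hA'
  set B' := τ.symm B with hB'
  rw [ContinuousLinearMapWOT.tendsto_iff_forall_dual_apply_tendsto]
  intro ξ y
  rw [Metric.tendsto_nhds]
  intro ε hε
  have hval : y ((τ (B' ∘L A')) ξ) = y (B' (A' ξ)) := by
    rw [JdLGtoWOT_apply]; rfl
  -- first: s-limit at the vector A' ξ
  have h1 : Filter.Tendsto (fun s => y ((τ (π s)) (A' ξ))) ↑p (nhds (y (B (A' ξ)))) :=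
    ContinuousLinearMapWOT.tendsto_iff_forall_dual_apply_tendsto.mp hB (A' ξ) y
  have h1' : ∀ᶠ s in (p : Filter S), dist (y (π s (A' ξ))) (y (B' (A' ξ))) < ε / 2 := by
    have := Metric.tendsto_nhds.mp h1 (ε / 2) (by positivity)
    simpa only [hτ, JdLGtoWOT_apply, ← wot_symm_apply B (A' ξ), hB'] using this
  rw [show (fun s => dist (y ((τ (π s)) ξ)) (y ((τ (B' ∘L A')) ξ)) < ε)
      = fun s => dist (y (π s ξ)) (y (B' (A' ξ))) < ε from by
      funext s; rw [hval, JdLGtoWOT_apply]]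
  rw [Ultrafilter.eventually_mul]
  filter_upwards [h1'] with s hs
  -- second: t-limit with the functional y ∘ π s
  have h2 : Filter.Tendsto (fun t => (y.comp (π s)) ((τ (π t)) ξ)) ↑q
      (nhds ((y.comp (π s)) (A ξ))) :=
    ContinuousLinearMapWOT.tendsto_iff_forall_dual_apply_tendsto.mp hA ξ (y.comp (π s))
  have h2' : ∀ᶠ t in (q : Filter S),
      dist (y (π s (π t ξ))) (y (π s (A' ξ))) < ε / 2 := by
    have := Metric.tendsto_nhds.mp h2 (ε / 2) (by positivity)
    simpa only [hτ, JdLGtoWOT_apply, ContinuousLinearMap.comp_apply,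
      ← wot_symm_apply A ξ, hA'] using this
  filter_upwards [h2'] with t ht
  calc dist (y (π (s * t) ξ)) (y (B' (A' ξ)))
      ≤ dist (y (π (s * t) ξ)) (y (π s (A' ξ))) + dist (y (π s (A' ξ))) (y (B' (A' ξ))) :=
        dist_triangle _ _ _
    _ < ε / 2 + ε / 2 := by
        refine add_lt_add_of_lt_of_lt ?_ hs
        rw [hmul s t]
        exact ht
    _ = ε := by ring

end AuxJdLG

/-- **Lemma 5.1 (i).**  Let `S` be a discrete semigroup, `E` a complex Banach space, `π` a
JdLG-admissible representation of `S` on `E`.  If `p ∈ βS` is an idempotent ultrafilter, then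
`p-lim_s π_s ξ = ξ` in the weak topology of `E` for every reversible vector `ξ ∈ E_r`. -/
theorem idempotent_ultrafilter_limit_fixes_reversible
    {S : Type*} [Semigroup S] [TopologicalSpace S] [DiscreteTopology S]
    {E : Type*} [NormedAddCommGroup E] [NormedSpace ℂ E] [CompleteSpace E]
    (π : S → E →L[ℂ] E) (hπ : JdLG.IsRepresentation E π)
    (hadm : JdLG.Admissible E (Set.range π))
    (p : Ultrafilter S) (hp : p * p = p) :
    ∀ ξ ∈ JdLG.rev E (Set.range π),
      Tendsto (fun s => toWeakSpace ℂ E (π s ξ)) (p : Filter S)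
        (𝓝 (toWeakSpace ℂ E ξ)) := by
  classical
  intro ξ hξ
  set τ := (JdLGtoWOT (E := E)) with hτ
  set T := Set.range π with hT
  set K := closure (τ '' T) with hK
  simp only [JdLG.rev, Set.mem_setOf_eq] at hξ
  have hTcomp : ∀ a ∈ T, ∀ b ∈ T, a ∘L b ∈ T := by
    rintro - ⟨s, rfl⟩ - ⟨t, rfl⟩
    exact ⟨s * t, hπ.1 s t⟩
  have hmemK : ∀ s : S, τ (π s) ∈ K := fun s =>
    subset_closure ⟨π s, ⟨s, rfl⟩, rfl⟩
  have hle : ↑(p.map fun s => τ (π s)) ≤ Filter.principal K := by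
    rw [Ultrafilter.coe_map]
    exact Filter.le_principal_iff.mpr (Filter.mem_map.mpr
      (Filter.univ_mem' fun s => hmemK s))
  have hcpt : IsCompact K := hadm.1
  obtain ⟨A, hAK, hAlim⟩ := hcpt.ultrafilter_le_nhds (p.map fun s => τ (π s)) hle
  set u := τ.symm A with hu
  have hlim : Filter.Tendsto (fun s => τ (π s)) ↑p (𝓝 A) := by
    rwa [Ultrafilter.coe_map] at hAlim
  have huC : u ∈ JdLG.wotClosure E T := by
    show τ u ∈ K
    rw [hu, LinearEquiv.apply_symm_apply]
    exact hAK
  -- `u` is idempotent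
  have hmul2 := tendsto_wot_ultra_mul π hπ.1 p p hlim hlim
  rw [hp] at hmul2
  have hAA : τ (u ∘L u) = A := tendsto_nhds_unique hmul2 hlim
  have huu : u ∘L u = u := by
    apply τ.injective
    rw [hAA, hu, LinearEquiv.apply_symm_apply]
  -- `u ξ` is reversible
  have hrev_u : u ξ ∈ JdLG.rev E T := by
    simp only [JdLG.rev, Set.mem_setOf_eq]
    intro w hw
    obtain ⟨v, hv, hvw⟩ := hξ (w ∘L u) (wotClosure_comp_mem hTcomp hw huC)
    refine ⟨u ∘L v, wotClosure_comp_mem hTcomp huC hv, ?_⟩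
    have hvw' : v (w (u ξ)) = ξ := by
      simpa only [ContinuousLinearMap.comp_apply] using hvw
    simp only [ContinuousLinearMap.comp_apply, hvw']
  -- `u ξ - ξ` is almost weakly stable
  have haws : u ξ - ξ ∈ JdLG.aws E T := by
    refine ⟨u, huC, ?_⟩
    have h1 : u (u ξ) = u ξ := by
      have := congrArg (fun a : E →L[ℂ] E => a ξ) huu
      simpa only [ContinuousLinearMap.comp_apply] using this
    rw [map_sub, h1, sub_self]
  have h0aws : (0 : E) ∈ JdLG.aws E T := ⟨u, huC, map_zero u⟩
  -- uniqueness of the decomposition forces `u ξ = ξ`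
  obtain ⟨q0, _, hq0uniq⟩ := hadm.2 (u ξ)
  have h1 := hq0uniq (u ξ, 0) ⟨hrev_u, h0aws, by simp⟩
  have h2 := hq0uniq (ξ, u ξ - ξ) ⟨by simpa only [JdLG.rev, Set.mem_setOf_eq] using hξ,
    haws, by rw [add_comm, sub_add_cancel]⟩
  have hfix : u ξ = ξ := by
    have := h1.trans h2.symm
    exact congrArg Prod.fst this
  -- conclude the weak convergence
  have hinj : Function.Injective ⇑(topDualPairing ℂ E).flip := by
    intro x x' h
    rw [← sub_eq_zero]
    refine NormedSpace.eq_zero_of_forall_dual_eq_zero ℂ fun g => ?_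
    have hg := LinearMap.congr_fun h g
    simp only [LinearMap.flip_apply, topDualPairing_apply] at hg
    simp [map_sub, hg]
  refine (WeakBilin.tendsto_iff_forall_eval_tendsto (B := (topDualPairing ℂ E).flip) hinj).mpr ?_
  intro y
  have hy : Filter.Tendsto (fun s => y (π s ξ)) ↑p (𝓝 (y ξ)) := by
    have h3 := ContinuousLinearMapWOT.tendsto_iff_forall_dual_apply_tendsto.mp hlim ξ y
    have h4 : y (A ξ) = y ξ := by
      rw [← wot_symm_apply A ξ, ← hu, hfix]
    simpa only [hτ, JdLGtoWOT_apply, h4] using h3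
  exact hy

end
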